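/- Let P be a finite set of positive integers, m = min P, n > m, u = FW(Q, n-m) where Q = {p-m : p ∈ P, p ≠ m} ∪ {m}, and let w be the prefix of FW(P,n) of length m. If m ≤ n - m then w = pref_m(u), and if m > n - m then w = u · |u| · (|u|+1) ⋯ (m-1) (concatenating u with the letters n-m, n-m+1, …, m-1). -/

import Mathlib

/-- minimum of a finite set of naturals (as `sInf`). -/
noncomputable def mP (P : Finset ℕ) : ℕ := sInf (↑P : Set ℕ)

/-- the generating relation `∼_{P,k}` on `{0,…,k-1}`. -/
def simRel (P : Finset ℕ) (k i j : ℕ) : Prop :=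
  i < k ∧ j < k ∧ (i % mP P = j % mP P ∨
    ∃ i' j', i' < k ∧ j' < k ∧ i' % mP P = i % mP P ∧ j' % mP P = j % mP P ∧
      (max i' j' - min i' j') ∈ P)

/-- the class of `i` under the equivalence closure `≈_{P,k}`. -/
def cls (P : Finset ℕ) (k i : ℕ) : Set ℕ := {j | Relation.EqvGen (simRel P k) i j}

/-- the FW-word: `FW P k i = min [i]_{P,k}`. -/
noncomputable def FW (P : Finset ℕ) (k : ℕ) : ℕ → ℕ := fun i => sInf (cls P k i)

/-- Euclidean reduction `Q = {p - m : p ∈ P, p ≠ m} ∪ {m}`. -/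
noncomputable def Qred (P : Finset ℕ) : Finset ℕ :=
  ((P.erase (mP P)).image (fun p => p - mP P)) ∪ {mP P}

/-- `p` is a period of the word `w` of length `n`. -/
def HasPeriodF {A : Type*} (w : ℕ → A) (n p : ℕ) : Prop :=
  ∀ i, i + p < n → w i = w (i + p)

/-!
Let `m = mP P ∈ P`. Positions congruent mod `m` are joined by steps of length `m`,
so the `P`-classes on `[0, n)` are the components of the graph joining `i` and `i + p` (`p ∈ P`).
A `Q`-step `a → a + (p - m)` inside `[0, n - m)` is the `P`-path `a → a + p → a + p - m`, and
conversely reducing mod `m` sends each `P`-step `a → a + p` to a `Q`-path from `a % m` through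
`a % m + (p - m) < n - m` followed by steps of length `m`. Hence for `i < m` the `P`-class and the
`Q`-class of `i` have the same elements below `m`, in particular the same minimum; and a letter
`i ≥ n - m` is alone in its `Q`-class.
-/

open Relation

theorem Relation.EqvGen.of_rel_eqvGen_comap {α β : Type*} {r : α → α → Prop}
    {s : β → β → Prop} (f : α → β) (h : ∀ a b, r a b → EqvGen s (f a) (f b)) {a b : α}
    (hab : EqvGen r a b) : EqvGen s (f a) (f b) :=
  ((EqvGen.is_equivalence s).comap f).eqvGen_iff.mp (hab.mono h)

lemma mP_mem {S : Finset ℕ} (hS : S.Nonempty) : mP S ∈ S :=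
  Finset.mem_coe.mp (Nat.sInf_mem (Finset.coe_nonempty.mpr hS))

lemma mP_le {S : Finset ℕ} {p : ℕ} (hp : p ∈ S) : mP S ≤ p :=
  Nat.sInf_le (Finset.mem_coe.mpr hp)

lemma mP_mem_Qred (P : Finset ℕ) : mP P ∈ Qred P :=
  Finset.mem_union_right _ (Finset.mem_singleton_self _)

lemma mP_Qred_mem (P : Finset ℕ) : mP (Qred P) ∈ Qred P :=
  mP_mem ⟨_, mP_mem_Qred P⟩

lemma sub_mP_mem_Qred {P : Finset ℕ} {p : ℕ} (hp : p ∈ P) (hpm : p ≠ mP P) :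
    p - mP P ∈ Qred P :=
  Finset.mem_union_left _ (Finset.mem_image_of_mem _ (Finset.mem_erase.mpr ⟨hpm, hp⟩))

def diffStep (S : Finset ℕ) (k i j : ℕ) : Prop :=
  j < k ∧ ∃ s ∈ S, i + s = j

section diffStep

variable {S : Finset ℕ} {k : ℕ}

lemma eqvGen_diffStep_of_dist_mem {i j : ℕ} (hi : i < k) (hj : j < k)
    (hS : max i j - min i j ∈ S) : EqvGen (diffStep S k) i j := by
  rcases le_total i j with h | h
  · rw [max_eq_right h, min_eq_left h] at hS
    exact .rel _ _ ⟨hj, _, hS, by omega⟩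
  · rw [max_eq_left h, min_eq_right h] at hS
    exact .symm _ _ (.rel _ _ ⟨hi, _, hS, by omega⟩)

lemma eqvGen_diffStep_add_mul {c : ℕ} (hc : c ∈ S) (i : ℕ) :
    ∀ t, i + c * t < k → EqvGen (diffStep S k) i (i + c * t)
  | 0, _ => .refl i
  | t + 1, h =>
    .trans _ _ _ (eqvGen_diffStep_add_mul hc i t (by rw [Nat.mul_succ] at h; omega))
      (.rel _ _ ⟨h, c, hc, by rw [Nat.mul_succ, Nat.add_assoc]⟩)

lemma eqvGen_diffStep_of_modEq {c i j : ℕ} (hc : c ∈ S) (hij : i ≡ j [MOD c]) (hi : i < k)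
    (hj : j < k) : EqvGen (diffStep S k) i j := by
  wlog h : i ≤ j generalizing i j
  · exact .symm _ _ (this hij.symm hj hi (by omega))
  obtain ⟨t, ht⟩ := (Nat.modEq_iff_dvd' h).mp hij
  have hj' : j = i + c * t := by omega
  subst hj'
  exact eqvGen_diffStep_add_mul hc i t hj

lemma eq_of_eqvGen_diffStep_of_le {i j : ℕ} (h : EqvGen (diffStep S k) i j) (hi : k ≤ i) :
    j = i := by
  suffices ∀ a b, EqvGen (diffStep S k) a b → a = b ∨ (a < k ∧ b < k) by
    have := this i j h; omega
  intro a b hab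
  induction hab with
  | rel a b hab => obtain ⟨hb, s, -, rfl⟩ := hab; omega
  | refl => exact .inl rfl
  | symm _ _ _ ih => omega
  | trans _ _ _ _ _ ih₁ ih₂ => omega

lemma eqvGen_simRel_iff_eqvGen_diffStep (hS : mP S ∈ S) {i j : ℕ} :
    EqvGen (simRel S k) i j ↔ EqvGen (diffStep S k) i j := by
  constructor
  · refine EqvGen.of_rel_eqvGen_comap id fun a b hab => ?_
    obtain ⟨ha, hb, hmod | ⟨a', b', ha', hb', hma, hmb, hd⟩⟩ := hab
    · exact eqvGen_diffStep_of_modEq hS hmod ha hb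
    · exact .trans _ _ _ (eqvGen_diffStep_of_modEq hS hma.symm ha ha')
        (.trans _ _ _ (eqvGen_diffStep_of_dist_mem ha' hb' hd)
          (eqvGen_diffStep_of_modEq hS hmb hb' hb))
  · refine fun h => EqvGen.mono (fun a b hab => ?_) i j h
    obtain ⟨hb, s, hs, rfl⟩ := hab
    refine ⟨by omega, hb, .inr ⟨a, a + s, by omega, hb, rfl, rfl, ?_⟩⟩
    rwa [max_eq_right (by omega), min_eq_left (by omega), Nat.add_sub_cancel_left]

lemma FW_spec (hS : mP S ∈ S) (i : ℕ) :
    EqvGen (diffStep S k) i (FW S k i) ∧ ∀ j, EqvGen (diffStep S k) i j → FW S k i ≤ j := by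
  have hcls : cls S k i = {j | EqvGen (diffStep S k) i j} :=
    Set.ext fun _ => eqvGen_simRel_iff_eqvGen_diffStep hS
  rw [FW, hcls]
  exact ⟨Nat.sInf_mem ⟨i, .refl i⟩, fun _ => Nat.sInf_le⟩

lemma FW_eq_self_of_le (hS : mP S ∈ S) {i : ℕ} (hi : k ≤ i) : FW S k i = i :=
  eq_of_eqvGen_diffStep_of_le (FW_spec hS i).1 hi

end diffStep

section Qred

variable {P : Finset ℕ} {n : ℕ}

lemma eqvGen_diffStep_of_diffStep_Qred (hP : mP P ∈ P) {a b : ℕ}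
    (hab : diffStep (Qred P) (n - mP P) a b) : EqvGen (diffStep P n) a b := by
  obtain ⟨hb, q, hq, rfl⟩ := hab
  rcases Finset.mem_union.mp hq with hq | hq
  · obtain ⟨p, hp, rfl⟩ := Finset.mem_image.mp hq
    have hpP := Finset.mem_of_mem_erase hp
    have hmp := mP_le hpP
    have hstep_m : diffStep P n (a + (p - mP P)) (a + (p - mP P) + mP P) :=
      ⟨by omega, _, hP, rfl⟩
    have hstep_p : diffStep P n a (a + (p - mP P) + mP P) := ⟨by omega, p, hpP, by omega⟩
    exact .trans _ _ _ (.rel _ _ hstep_p) (.symm _ _ (.rel _ _ hstep_m))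
  · rw [Finset.mem_singleton.mp hq]
    exact .rel _ _ ⟨by omega, _, hP, rfl⟩

lemma eqvGen_diffStep_Qred_mod_of_diffStep {a b : ℕ} (hab : diffStep P n a b) :
    EqvGen (diffStep (Qred P) (n - mP P)) (a % mP P) (b % mP P) := by
  obtain ⟨hb, p, hp, rfl⟩ := hab
  by_cases hpm : p = mP P
  · rw [hpm, Nat.add_mod_right]
    exact .refl _
  have hmp := mP_le hp
  have hmod_le := Nat.mod_le a (mP P)
  have hmid : a % mP P + (p - mP P) < n - mP P := by omega
  have hmid_mod : (a % mP P + (p - mP P)) % mP P = (a + p) % mP P := by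
    rw [Nat.mod_add_mod, show a + p = a + (p - mP P) + mP P by omega, Nat.add_mod_right]
  have hend : (a + p) % mP P < n - mP P :=
    hmid_mod ▸ (Nat.mod_le _ _).trans_lt hmid
  exact .trans _ _ _ (.rel _ _ ⟨hmid, _, sub_mP_mem_Qred hp hpm, rfl⟩)
    (eqvGen_diffStep_of_modEq (mP_mem_Qred P) (hmid_mod.trans (Nat.mod_mod _ _).symm)
      hmid hend)

lemma FW_eq_FW_Qred (hP : mP P ∈ P) {i : ℕ} (hi : i < mP P) :
    FW P n i = FW (Qred P) (n - mP P) i := by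
  obtain ⟨hconnP, hminP⟩ := FW_spec (k := n) hP i
  obtain ⟨hconnQ, hminQ⟩ := FW_spec (k := n - mP P) (mP_Qred_mem P) i
  have hFW_lt : FW P n i < mP P := (hminP i (.refl i)).trans_lt hi
  have hconnQ' := hconnP.of_rel_eqvGen_comap (· % mP P)
    fun _ _ => eqvGen_diffStep_Qred_mod_of_diffStep
  rw [Nat.mod_eq_of_lt hi, Nat.mod_eq_of_lt hFW_lt] at hconnQ'
  exact le_antisymm
    (hminP _ (EqvGen.of_rel_eqvGen_comap id (fun _ _ => eqvGen_diffStep_of_diffStep_Qred hP)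
      hconnQ))
    (hminQ _ hconnQ')

end Qred

theorem stmt10_general (P : Finset ℕ) (hP : P.Nonempty)
    (n : ℕ) :
    (mP P ≤ n - mP P → ∀ i < mP P, FW P n i = FW (Qred P) (n - mP P) i) ∧
    (n - mP P < mP P → ∀ i < mP P,
      FW P n i = if i < n - mP P then FW (Qred P) (n - mP P) i else i) := by
  have hm := mP_mem hP
  refine ⟨fun _ i hi => FW_eq_FW_Qred hm hi, fun _ i hi => ?_⟩
  rw [FW_eq_FW_Qred hm hi]
  split_ifs with hin
  · rfl
  · exact FW_eq_self_of_le (mP_Qred_mem P) (by omega)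

theorem stmt10 (P : Finset ℕ) (hP : P.Nonempty) (hpos : ∀ p ∈ P, 0 < p)
    (n : ℕ) (hn : mP P < n) :
    (mP P ≤ n - mP P → ∀ i < mP P, FW P n i = FW (Qred P) (n - mP P) i) ∧
    (n - mP P < mP P → ∀ i < mP P,
      FW P n i = if i < n - mP P then FW (Qred P) (n - mP P) i else i) :=
  stmt10_general P hP n
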